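/- Let q : ℤ⁶ → ℤ × (ℤ/2ℤ) × (ℤ/2ℤ) be the additive group homomorphism sending the standard basis vectors e₁,…,e₆ to (8,0,0), (4,0,0), (2,1,0), (2,1,1), (2,0,1), (1,0,0) respectively. Then q is surjective, and the kernel of q equals the subgroup of ℤ⁶ generated by the five vectors g₁ = (−2,0,3,3,3,−2), g₂ = (1,−2,0,0,0,0), g₃ = (−1,3,−2,0,0,0), g₄ = (−1,3,0,−2,0,0), g₅ = (−1,3,0,0,−2,0). -/

import Mathlib

/-- Coordinate vectors of the generators of the Tambara ideal `𝔞(Q₈/Q₈)` in the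
basis `[Q₈/e], [Q₈/C₂], [Q₈/I], [Q₈/J], [Q₈/K], [Q₈/Q₈]` of `A(Q₈) ≅ ℤ⁶`. -/
def g1 : Fin 6 → ℤ := ![-2, 0, 3, 3, 3, -2]
def g2 : Fin 6 → ℤ := ![1, -2, 0, 0, 0, 0]
def g3 : Fin 6 → ℤ := ![-1, 3, -2, 0, 0, 0]
def g4 : Fin 6 → ℤ := ![-1, 3, 0, -2, 0, 0]
def g5 : Fin 6 → ℤ := ![-1, 3, 0, 0, -2, 0]

/-! The conditions on the basis vectors force
`q x = (8x₀ + 4x₁ + 2x₂ + 2x₃ + 2x₄ + x₅, x₂ + x₃ mod 2, x₃ + x₄ mod 2)`,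
which is onto because of the last coordinate. The generators lie in the kernel by evaluation.
Conversely, for a kernel vector the coefficients of an expression in the generators are forced:
coordinate 5 gives that of `g₁`, coordinates 2, 3, 4 those of `g₃, g₄, g₅` and coordinate 1
that of `g₂`. They are integers because `x₂ + x₃ = 2k` and `x₃ + x₄ = 2l`, and coordinate 0
then matches by the first kernel equation. -/

namespace BurnsideQ8

def reduction : (Fin 6 → ℤ) →+ ℤ × ZMod 2 × ZMod 2 :=
  AddMonoidHom.mk' (fun x => (8 * x 0 + 4 * x 1 + 2 * x 2 + 2 * x 3 + 2 * x 4 + x 5,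
      ((x 2 + x 3 : ℤ) : ZMod 2), ((x 3 + x 4 : ℤ) : ZMod 2)))
    fun x y => by
      simp only [Pi.add_apply, Int.cast_add, Prod.mk_add_mk, Prod.mk.injEq]
      exact ⟨by ring, by ring, by ring⟩

@[simp]
lemma reduction_apply (x : Fin 6 → ℤ) :
    reduction x = (8 * x 0 + 4 * x 1 + 2 * x 2 + 2 * x 3 + 2 * x 4 + x 5,
      ((x 2 + x 3 : ℤ) : ZMod 2), ((x 3 + x 4 : ℤ) : ZMod 2)) :=
  rfl

lemma eq_reduction_of_single (q : (Fin 6 → ℤ) →+ ℤ × ZMod 2 × ZMod 2)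
    (h0 : q (Pi.single 0 1) = (8, 0, 0)) (h1 : q (Pi.single 1 1) = (4, 0, 0))
    (h2 : q (Pi.single 2 1) = (2, 1, 0)) (h3 : q (Pi.single 3 1) = (2, 1, 1))
    (h4 : q (Pi.single 4 1) = (2, 0, 1)) (h5 : q (Pi.single 5 1) = (1, 0, 0)) :
    q = reduction := by
  ext1 i
  apply AddMonoidHom.ext_int
  fin_cases i <;> simp [h0, h1, h2, h3, h4, h5]

lemma reduction_surjective : Function.Surjective reduction := by
  rintro ⟨a, b, c⟩
  obtain ⟨b, rfl⟩ := ZMod.intCast_surjective b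
  obtain ⟨c, rfl⟩ := ZMod.intCast_surjective c
  refine ⟨![0, 0, b, 0, c, a - 2 * b - 2 * c], ?_⟩
  simp

lemma mem_ker_reduction {x : Fin 6 → ℤ} :
    x ∈ reduction.ker ↔
      8 * x 0 + 4 * x 1 + 2 * x 2 + 2 * x 3 + 2 * x 4 + x 5 = 0 ∧
        2 ∣ x 2 + x 3 ∧ 2 ∣ x 3 + x 4 := by
  simp only [AddMonoidHom.mem_ker, reduction_apply, Prod.mk_eq_zero,
    ZMod.intCast_zmod_eq_zero_iff_dvd, Nat.cast_ofNat]

lemma generators_subset_ker : ({g1, g2, g3, g4, g5} : Set (Fin 6 → ℤ)) ⊆ reduction.ker := by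
  rintro g (rfl | rfl | rfl | rfl | rfl) <;>
    exact mem_ker_reduction.mpr (by decide)

lemma ker_reduction_le_closure :
    reduction.ker ≤ AddSubgroup.closure {g1, g2, g3, g4, g5} := by
  intro x hx
  obtain ⟨hsum, ⟨k, hk⟩, ⟨l, hl⟩⟩ := mem_ker_reduction.mp hx
  have hcomb : x = (4 * x 0 + 2 * x 1 + x 2 + x 3 + x 4) • g1
      + (27 * x 0 + 13 * x 1 + 6 * x 2 + 6 * x 3 + 6 * x 4) • g2
      + (6 * x 0 + 3 * x 1 + x 2 + 3 * l) • g3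
      + (6 * x 0 + 3 * x 1 + 3 * k + 3 * l - 2 * x 3) • g4
      + (6 * x 0 + 3 * x 1 + 3 * k + x 4) • g5 := by
    funext i
    fin_cases i <;> simp [g1, g2, g3, g4, g5] <;> omega
  have hmem : ∀ g ∈ ({g1, g2, g3, g4, g5} : Set (Fin 6 → ℤ)),
      ∀ n : ℤ, n • g ∈ AddSubgroup.closure {g1, g2, g3, g4, g5} :=
    fun g hg n => AddSubgroup.zsmul_mem _ (AddSubgroup.subset_closure hg) n
  rw [hcomb]
  refine add_mem (add_mem (add_mem (add_mem ?_ ?_) ?_) ?_) ?_ <;> exact hmem _ (by simp) _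

lemma ker_reduction : reduction.ker = AddSubgroup.closure {g1, g2, g3, g4, g5} :=
  le_antisymm ker_reduction_le_closure
    ((AddSubgroup.closure_le _).mpr generators_subset_ker)

end BurnsideQ8

theorem stmt1 :
    (∃ q : (Fin 6 → ℤ) →+ ℤ × ZMod 2 × ZMod 2,
      q (Pi.single 0 1) = (8, 0, 0) ∧ q (Pi.single 1 1) = (4, 0, 0) ∧
      q (Pi.single 2 1) = (2, 1, 0) ∧ q (Pi.single 3 1) = (2, 1, 1) ∧
      q (Pi.single 4 1) = (2, 0, 1) ∧ q (Pi.single 5 1) = (1, 0, 0)) ∧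
    (∀ q : (Fin 6 → ℤ) →+ ℤ × ZMod 2 × ZMod 2,
      (q (Pi.single 0 1) = (8, 0, 0) ∧ q (Pi.single 1 1) = (4, 0, 0) ∧
       q (Pi.single 2 1) = (2, 1, 0) ∧ q (Pi.single 3 1) = (2, 1, 1) ∧
       q (Pi.single 4 1) = (2, 0, 1) ∧ q (Pi.single 5 1) = (1, 0, 0)) →
      Function.Surjective q ∧
      q.ker = AddSubgroup.closure {g1, g2, g3, g4, g5}) := by
  refine ⟨⟨BurnsideQ8.reduction, by simp⟩, ?_⟩
  rintro q ⟨h0, h1, h2, h3, h4, h5⟩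
  obtain rfl := BurnsideQ8.eq_reduction_of_single q h0 h1 h2 h3 h4 h5
  exact ⟨BurnsideQ8.reduction_surjective, BurnsideQ8.ker_reduction⟩
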